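/- arXiv:2202.09200 — 3 statements merged into one kernel-verified Lean document; each statement's English description precedes it below -/
import Mathlib

section
/- If a > 0, a₁,a₂,a₃ ≥ a, |a₁−a₂| ≤ Ch and |a₁−a₃| ≤ Ch, then |M_w(a₁,a₂,a₃) − H_w(a₁,a₂,a₃)| ≤ 4C²h²/a for any positive weights summing to 1 (i.e., the difference is O(h²)). -/
set_option maxHeartbeats 1000000 in

theorem weighted_AM_HM_close_three (a a₁ a₂ a₃ w₁ w₂ w₃ C h : ℝ)
    (ha : 0 < a) (ha₁ : a ≤ a₁) (ha₂ : a ≤ a₂) (ha₃ : a ≤ a₃)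
    (hw₁ : 0 < w₁) (hw₂ : 0 < w₂) (hw₃ : 0 < w₃)
    (hw : w₁ + w₂ + w₃ = 1)
    (hC : 0 < C) (hh : 0 < h)
    (h12 : |a₁ - a₂| ≤ C * h) (h13 : |a₁ - a₃| ≤ C * h) :
    |(w₁ * a₁ + w₂ * a₂ + w₃ * a₃)
      - a₁ * a₂ * a₃ / (w₁ * a₂ * a₃ + w₂ * a₁ * a₃ + w₃ * a₁ * a₂)|
      ≤ 4 * C ^ 2 * h ^ 2 / a := by
  have h1 : 0 < a₁ := lt_of_lt_of_le ha ha₁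
  have h2 : 0 < a₂ := lt_of_lt_of_le ha ha₂
  have h3 : 0 < a₃ := lt_of_lt_of_le ha ha₃
  have hD : 0 < w₁ * a₂ * a₃ + w₂ * a₁ * a₃ + w₃ * a₁ * a₂ := by positivity
  have key : (w₁ * a₁ + w₂ * a₂ + w₃ * a₃)
      - a₁ * a₂ * a₃ / (w₁ * a₂ * a₃ + w₂ * a₁ * a₃ + w₃ * a₁ * a₂)
      = (w₁ * w₂ * a₃ * (a₁ - a₂) ^ 2 + w₁ * w₃ * a₂ * (a₁ - a₃) ^ 2
        + w₂ * w₃ * a₁ * (a₂ - a₃) ^ 2)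
        / (w₁ * a₂ * a₃ + w₂ * a₁ * a₃ + w₃ * a₁ * a₂) := by
    have hw3 : w₃ = 1 - w₁ - w₂ := by linarith
    subst hw3
    field_simp
    ring
  rw [key, abs_div, abs_of_pos hD, abs_of_nonneg (by positivity),
    div_le_div_iff₀ hD ha]
  have hP : (0:ℝ) < C ^ 2 * h ^ 2 := by positivity
  have sq12 : (a₁ - a₂) ^ 2 ≤ C ^ 2 * h ^ 2 := by
    have := abs_le.mp h12
    calc (a₁ - a₂) ^ 2 ≤ (C * h) ^ 2 := sq_le_sq' (by linarith) (by linarith)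
      _ = C ^ 2 * h ^ 2 := by ring
  have sq13 : (a₁ - a₃) ^ 2 ≤ C ^ 2 * h ^ 2 := by
    have := abs_le.mp h13
    calc (a₁ - a₃) ^ 2 ≤ (C * h) ^ 2 := sq_le_sq' (by linarith) (by linarith)
      _ = C ^ 2 * h ^ 2 := by ring
  have h23 : |a₂ - a₃| ≤ 2 * (C * h) := by
    have t := abs_sub_le a₂ a₁ a₃
    have t2 : |a₂ - a₁| = |a₁ - a₂| := abs_sub_comm _ _
    linarith
  have sq23 : (a₂ - a₃) ^ 2 ≤ 4 * (C ^ 2 * h ^ 2) := by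
    have := abs_le.mp h23
    calc (a₂ - a₃) ^ 2 ≤ (2 * (C * h)) ^ 2 := sq_le_sq' (by linarith) (by linarith)
      _ = 4 * (C ^ 2 * h ^ 2) := by ring
  have hwa1 : w₁ * a ≤ a₁ :=
    le_trans (by nlinarith [mul_le_mul_of_nonneg_right (show w₁ ≤ 1 by linarith) ha.le]) ha₁
  have hwa2 : w₂ * a ≤ a₂ :=
    le_trans (by nlinarith [mul_le_mul_of_nonneg_right (show w₂ ≤ 1 by linarith) ha.le]) ha₂
  have hwa3 : w₃ * a ≤ a₃ :=
    le_trans (by nlinarith [mul_le_mul_of_nonneg_right (show w₃ ≤ 1 by linarith) ha.le]) ha₃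
  have t1 : w₁ * w₂ * a₃ * (a₁ - a₂) ^ 2 * a ≤ C ^ 2 * h ^ 2 * (w₁ * a₂ * a₃) := by
    calc w₁ * w₂ * a₃ * (a₁ - a₂) ^ 2 * a = (w₁ * a₃) * ((a₁ - a₂) ^ 2 * (w₂ * a)) := by ring
      _ ≤ (w₁ * a₃) * ((C ^ 2 * h ^ 2) * a₂) := by
          apply mul_le_mul_of_nonneg_left _ (by positivity)
          exact mul_le_mul sq12 hwa2 (by positivity) (by positivity)
      _ = C ^ 2 * h ^ 2 * (w₁ * a₂ * a₃) := by ring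
  have t2 : w₁ * w₃ * a₂ * (a₁ - a₃) ^ 2 * a ≤ C ^ 2 * h ^ 2 * (w₃ * a₁ * a₂) := by
    calc w₁ * w₃ * a₂ * (a₁ - a₃) ^ 2 * a = (w₃ * a₂) * ((a₁ - a₃) ^ 2 * (w₁ * a)) := by ring
      _ ≤ (w₃ * a₂) * ((C ^ 2 * h ^ 2) * a₁) := by
          apply mul_le_mul_of_nonneg_left _ (by positivity)
          exact mul_le_mul sq13 hwa1 (by positivity) (by positivity)
      _ = C ^ 2 * h ^ 2 * (w₃ * a₁ * a₂) := by ring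
  have base : 4 * (w₂ * w₃ * a) ≤ 2 * (w₂ * a₃) + 2 * (w₃ * a₂) := by
    nlinarith [mul_le_mul_of_nonneg_left hwa3 hw₂.le, mul_le_mul_of_nonneg_left hwa2 hw₃.le]
  have t3 : w₂ * w₃ * a₁ * (a₂ - a₃) ^ 2 * a
      ≤ C ^ 2 * h ^ 2 * (2 * (w₂ * a₁ * a₃) + 2 * (w₃ * a₁ * a₂)) := by
    calc w₂ * w₃ * a₁ * (a₂ - a₃) ^ 2 * a = ((a₂ - a₃) ^ 2) * (w₂ * w₃ * a₁ * a) := by ring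
      _ ≤ (4 * (C ^ 2 * h ^ 2)) * (w₂ * w₃ * a₁ * a) :=
          mul_le_mul_of_nonneg_right sq23 (by positivity)
      _ = (C ^ 2 * h ^ 2 * a₁) * (4 * (w₂ * w₃ * a)) := by ring
      _ ≤ (C ^ 2 * h ^ 2 * a₁) * (2 * (w₂ * a₃) + 2 * (w₃ * a₂)) :=
          mul_le_mul_of_nonneg_left base (by positivity)
      _ = C ^ 2 * h ^ 2 * (2 * (w₂ * a₁ * a₃) + 2 * (w₃ * a₁ * a₂)) := by ring
  calc (w₁ * w₂ * a₃ * (a₁ - a₂) ^ 2 + w₁ * w₃ * a₂ * (a₁ - a₃) ^ 2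
        + w₂ * w₃ * a₁ * (a₂ - a₃) ^ 2) * a
      = w₁ * w₂ * a₃ * (a₁ - a₂) ^ 2 * a + w₁ * w₃ * a₂ * (a₁ - a₃) ^ 2 * a
        + w₂ * w₃ * a₁ * (a₂ - a₃) ^ 2 * a := by ring
    _ ≤ C ^ 2 * h ^ 2 * (w₁ * a₂ * a₃) + C ^ 2 * h ^ 2 * (w₃ * a₁ * a₂)
        + C ^ 2 * h ^ 2 * (2 * (w₂ * a₁ * a₃) + 2 * (w₃ * a₁ * a₂)) := by linarith
    _ = 4 * C ^ 2 * h ^ 2 * (w₁ * a₂ * a₃ + w₂ * a₁ * a₃ + w₃ * a₁ * a₂)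
        - (C ^ 2 * h ^ 2 * (3 * (w₁ * a₂ * a₃)) + C ^ 2 * h ^ 2 * (2 * (w₂ * a₁ * a₃))
          + C ^ 2 * h ^ 2 * (w₃ * a₁ * a₂)) := by ring
    _ ≤ 4 * C ^ 2 * h ^ 2 * (w₁ * a₂ * a₃ + w₂ * a₁ * a₃ + w₃ * a₁ * a₂) := by
        have n1 : 0 ≤ C ^ 2 * h ^ 2 * (3 * (w₁ * a₂ * a₃)) := by positivity
        have n2 : 0 ≤ C ^ 2 * h ^ 2 * (2 * (w₂ * a₁ * a₃)) := by positivity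
        have n3 : 0 ≤ C ^ 2 * h ^ 2 * (w₃ * a₁ * a₂) := by positivity
        linarith
end

section
/- For n positive reals a₁,…,aₙ and positive weights w₁,…,wₙ summing to 1, the difference between the weighted arithmetic and harmonic means satisfies the identity M_w − H_w = [Σ_{i<j} wᵢwⱼ(aᵢ−aⱼ)² Π_{k≠i,j} a_k] / [Σⱼ wⱼ Π_{k≠j} a_k], where M_w = Σᵢ wᵢaᵢ and H_w = (Πₖ aₖ)/(Σⱼ wⱼ Π_{k≠j} a_k). -/
/-!
Multiply through by the denominator `D = ∑ⱼ wⱼ Pⱼ`, where `Pⱼ = ∏_{k ≠ j} aₖ`. Since `∑ wᵢ = 1`,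
`M_w · D - ∏ aₖ = ∑_{i,j} wᵢ wⱼ (aᵢ Pⱼ - ∏ aₖ)`. The diagonal terms vanish because `aᵢ Pᵢ = ∏ aₖ`,
and the terms `(i, j)` and `(j, i)` pair up to `wᵢ wⱼ (aᵢ - aⱼ)² ∏_{k ≠ i, j} aₖ`.
-/

open Finset

theorem Finset.sum_univ_prod_eq_sum_lt_add_sum_diag {ι M : Type*} [Fintype ι] [LinearOrder ι]
    [AddCommMonoid M] (f : ι × ι → M) :
    ∑ p, f p = ∑ p ∈ univ.filter (fun p : ι × ι => p.1 < p.2), (f p + f p.swap)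
      + ∑ i, f (i, i) := by
  have hgt : ∑ p ∈ univ.filter (fun p : ι × ι => p.2 < p.1), f p
      = ∑ p ∈ univ.filter (fun p : ι × ι => p.1 < p.2), f p.swap :=
    (sum_equiv (Equiv.prodComm ι ι) (by simp) (by simp)).symm
  have hdiag : ∑ p ∈ univ.filter (fun p : ι × ι => p.1 = p.2), f p = ∑ i, f (i, i) := by
    simp [sum_filter, Fintype.sum_prod_type]
  have hnotlt : univ.filter (fun p : ι × ι => ¬ p.1 < p.2)
      = univ.filter (fun p : ι × ι => p.2 < p.1) ∪ univ.filter (fun p : ι × ι => p.1 = p.2) := by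
    ext p; simp [le_iff_lt_or_eq, eq_comm]
  rw [← sum_filter_add_sum_filter_not univ (fun p : ι × ι => p.1 < p.2), hnotlt,
    sum_union (disjoint_filter.2 fun p _ h => h.ne'), hgt, hdiag, sum_add_distrib, add_assoc]

section

variable {ι : Type*} [Fintype ι] [DecidableEq ι]

theorem Finset.mul_prod_univ_sdiff_singleton {M : Type*} [CommMonoid M] (a : ι → M) (i : ι) :
    a i * ∏ k ∈ univ \ {i}, a k = ∏ k, a k := by
  rw [sdiff_singleton_eq_erase, mul_prod_erase _ _ (mem_univ i)]

theorem Finset.mul_prod_univ_sdiff_pair {M : Type*} [CommMonoid M] (a : ι → M) {i j : ι}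
    (h : i ≠ j) : a i * ∏ k ∈ univ \ {i, j}, a k = ∏ k ∈ univ \ {j}, a k := by
  rw [sdiff_insert, mul_prod_erase _ _ (by simp [h])]

theorem Finset.mul_prod_sdiff_add_mul_prod_sdiff_sub {R : Type*} [CommRing R] (a : ι → R)
    (i j : ι) :
    a i * ∏ k ∈ univ \ {j}, a k + a j * ∏ k ∈ univ \ {i}, a k - 2 * ∏ k, a k
      = (a i - a j) ^ 2 * ∏ k ∈ univ \ {i, j}, a k := by
  rcases eq_or_ne i j with rfl | hij
  · rw [mul_prod_univ_sdiff_singleton]; ring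
  have hj := mul_prod_univ_sdiff_pair a hij
  have hi : a j * ∏ k ∈ univ \ {i, j}, a k = ∏ k ∈ univ \ {i}, a k := by
    rw [pair_comm, mul_prod_univ_sdiff_pair a hij.symm]
  rw [← mul_prod_univ_sdiff_singleton a i, ← hi, ← hj]
  ring

theorem Finset.sum_mul_sum_mul_prod_sdiff_sub {R : Type*} [CommRing R] [LinearOrder ι]
    (a w : ι → R) :
    (∑ i, w i * a i) * (∑ j, w j * ∏ k ∈ univ \ {j}, a k) - (∑ i, w i) ^ 2 * ∏ k, a k
      = ∑ p ∈ univ.filter (fun p : ι × ι => p.1 < p.2),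
          w p.1 * w p.2 * (a p.1 - a p.2) ^ 2 * ∏ k ∈ univ \ {p.1, p.2}, a k := by
  let f : ι × ι → R := fun p => w p.1 * w p.2 * (a p.1 * ∏ k ∈ univ \ {p.2}, a k - ∏ k, a k)
  have hf : (∑ i, w i * a i) * (∑ j, w j * ∏ k ∈ univ \ {j}, a k) - (∑ i, w i) ^ 2 * ∏ k, a k
      = ∑ p, f p := by
    rw [Fintype.sum_prod_type, sq, sum_mul_sum, sum_mul_sum, sum_mul, ← sum_sub_distrib]
    refine sum_congr rfl fun i _ => ?_
    rw [sum_mul, ← sum_sub_distrib]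
    exact sum_congr rfl fun j _ => by ring
  rw [hf, sum_univ_prod_eq_sum_lt_add_sum_diag]
  simp only [f, Prod.fst_swap, Prod.snd_swap, mul_prod_univ_sdiff_singleton, sub_self, mul_zero,
    sum_const_zero, add_zero]
  exact sum_congr rfl fun p _ => by
    linear_combination w p.1 * w p.2 * mul_prod_sdiff_add_mul_prod_sdiff_sub a p.1 p.2

end

theorem weighted_AM_sub_HM_n_general (n : ℕ)
    (a w : Fin n → ℝ) (ha : ∀ i, 0 < a i) (hw : ∀ i, 0 < w i)
    (hsum : ∑ i, w i = 1) :
    (∑ i, w i * a i)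
      - (∏ k, a k) / (∑ j, w j * ∏ k ∈ Finset.univ \ {j}, a k)
      = (∑ p ∈ Finset.univ.filter (fun p : Fin n × Fin n => p.1 < p.2),
          w p.1 * w p.2 * (a p.1 - a p.2) ^ 2
            * ∏ k ∈ Finset.univ \ {p.1, p.2}, a k)
        / (∑ j, w j * ∏ k ∈ Finset.univ \ {j}, a k) := by
  have hD : 0 < ∑ j, w j * ∏ k ∈ Finset.univ \ {j}, a k :=
    sum_pos (fun j _ => mul_pos (hw j) (prod_pos fun k _ => ha k))
      (nonempty_of_sum_ne_zero (hsum ▸ one_ne_zero))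
  rw [← sum_mul_sum_mul_prod_sdiff_sub, hsum, one_pow, one_mul, eq_div_iff hD.ne', sub_mul,
    div_mul_cancel₀ _ hD.ne']

theorem weighted_AM_sub_HM_n (n : ℕ) (hn : 2 ≤ n)
    (a w : Fin n → ℝ) (ha : ∀ i, 0 < a i) (hw : ∀ i, 0 < w i)
    (hsum : ∑ i, w i = 1) :
    (∑ i, w i * a i)
      - (∏ k, a k) / (∑ j, w j * ∏ k ∈ Finset.univ \ {j}, a k)
      = (∑ p ∈ Finset.univ.filter (fun p : Fin n × Fin n => p.1 < p.2),
          w p.1 * w p.2 * (a p.1 - a p.2) ^ 2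
            * ∏ k ∈ Finset.univ \ {p.1, p.2}, a k)
        / (∑ j, w j * ∏ k ∈ Finset.univ \ {j}, a k) :=
  weighted_AM_sub_HM_n_general n a w ha hw hsum
end

section
/- If aᵢ ≥ a > 0 for all i, |a₁ − aᵢ| ≤ Ch for all i = 2,…,n, and wᵢ > 0 with Σwᵢ = 1, then |M_w − H_w| ≤ 4C²h²·(Σ_{i<j} wᵢwⱼ)/a ≤ 2C²h²/a, so the weighted arithmetic and harmonic means of n values differ by O(h²). -/
/-!
Lagrange's identity `(∑ wᵢaᵢ)(∑ wᵢ/aᵢ) - (∑ wᵢ)² = ∑_{i<j} wᵢwⱼ (aᵢ - aⱼ)² / (aᵢaⱼ)` gives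
`M_w - H_w = H_w ∑_{i<j} wᵢwⱼ (aᵢ - aⱼ)² / (aᵢaⱼ)`. All `aᵢ` lie within `d = 2Ch` of each other,
so `H_w ≤ max aₖ ≤ min(aᵢ, aⱼ) + d`, and each term `H_w (aᵢ - aⱼ)² / (aᵢaⱼ)` is at most `d² / a`.
Finally `2 ∑_{i<j} wᵢwⱼ ≤ (∑ wᵢ)² = 1`.
-/

open Finset

section Pairs

variable {ι : Type*} [Fintype ι] [LinearOrder ι]

theorem sum_sum_eq_sum_lt_add_sum_diag {M : Type*} [AddCommMonoid M] (f : ι → ι → M) :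
    ∑ i, ∑ j, f i j
      = ∑ p ∈ univ.filter (fun p : ι × ι => p.1 < p.2), (f p.1 p.2 + f p.2 p.1)
        + ∑ i, f i i := by
  have hswap : ∑ p ∈ univ.filter (fun p : ι × ι => p.1 < p.2), f p.2 p.1
      = ∑ p ∈ univ.filter (fun p : ι × ι => p.2 < p.1), f p.1 p.2 :=
    sum_nbij' Prod.swap Prod.swap (by simp) (by simp) (by simp) (by simp) (by simp)
  have hdiag : ∑ i, f i i = ∑ p ∈ univ.filter (fun p : ι × ι => p.1 = p.2), f p.1 p.2 :=
    sum_nbij' (fun i => (i, i)) Prod.fst (by simp) (by simp) (by simp) (by aesop) (by simp)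
  rw [← Fintype.sum_prod_type', sum_add_distrib, hswap, hdiag, add_assoc,
    ← sum_filter_add_sum_filter_not univ (fun p : ι × ι => p.1 < p.2),
    ← sum_filter_add_sum_filter_not (univ.filter fun p : ι × ι => ¬ p.1 < p.2)
      (fun p : ι × ι => p.2 < p.1), filter_filter, filter_filter]
  congr 3 <;> ext p <;> simp only [mem_filter, mem_univ, true_and] <;> grind

theorem two_mul_sum_lt_mul_le_sq_sum {R : Type*} [CommRing R] [LinearOrder R]
    [IsStrictOrderedRing R] (w : ι → R) :
    2 * ∑ p ∈ univ.filter (fun p : ι × ι => p.1 < p.2), w p.1 * w p.2 ≤ (∑ i, w i) ^ 2 := by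
  rw [sq, sum_mul_sum, sum_sum_eq_sum_lt_add_sum_diag, mul_sum]
  refine le_add_of_le_of_nonneg (sum_le_sum fun p _ => le_of_eq ?_)
    (sum_nonneg fun i _ => mul_self_nonneg _)
  ring

theorem sum_mul_sum_div_sub_sq_sum {K : Type*} [Field K] (w a : ι → K) (ha : ∀ i, a i ≠ 0) :
    (∑ i, w i * a i) * (∑ i, w i / a i) - (∑ i, w i) ^ 2
      = ∑ p ∈ univ.filter (fun p : ι × ι => p.1 < p.2),
          w p.1 * w p.2 * ((a p.1 - a p.2) ^ 2 / (a p.1 * a p.2)) := by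
  simp only [sq, sum_mul_sum, ← sum_sub_distrib]
  rw [sum_sum_eq_sum_lt_add_sum_diag]
  have hdiag i : w i * a i * (w i / a i) - w i * w i = 0 := by
    field_simp [ha i]
    ring
  simp only [hdiag, sum_const_zero, add_zero]
  refine sum_congr rfl fun p _ => ?_
  field_simp [ha p.1, ha p.2]
  ring

theorem sub_inv_sum_div_eq {K : Type*} [Field K] {w a : ι → K} (hsum : ∑ i, w i = 1)
    (ha : ∀ i, a i ≠ 0) (hS : ∑ i, w i / a i ≠ 0) :
    (∑ i, w i * a i) - (∑ i, w i / a i)⁻¹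
      = ∑ p ∈ univ.filter (fun p : ι × ι => p.1 < p.2),
          w p.1 * w p.2 * ((∑ i, w i / a i)⁻¹ * ((a p.1 - a p.2) ^ 2 / (a p.1 * a p.2))) := by
  have hlagrange := sum_mul_sum_div_sub_sq_sum w a ha
  rw [hsum, one_pow] at hlagrange
  calc (∑ i, w i * a i) - (∑ i, w i / a i)⁻¹
      = (∑ i, w i / a i)⁻¹ * ((∑ i, w i * a i) * (∑ i, w i / a i) - 1) := by
        field_simp
    _ = _ := by
        rw [hlagrange, mul_sum]
        exact sum_congr rfl fun p _ => by ring

end Pairs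

theorem inv_le_sum_div {ι : Type*} [Fintype ι] {w a : ι → ℝ} {M : ℝ} (hw : ∀ i, 0 ≤ w i)
    (hsum : ∑ i, w i = 1) (ha : ∀ i, 0 < a i) (haM : ∀ i, a i ≤ M) :
    M⁻¹ ≤ ∑ i, w i / a i :=
  calc M⁻¹ = ∑ i, w i / M := by rw [← sum_div, hsum, one_div]
    _ ≤ ∑ i, w i / a i := sum_le_sum fun i _ => div_le_div_of_nonneg_left (hw i) (ha i) (haM i)

theorem mul_sq_sub_div_mul_le {α d x y m : ℝ} (hα : 0 < α) (hx : α ≤ x) (hy : α ≤ y)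
    (hxy : |x - y| ≤ d) (hmx : m ≤ x + d) (hmy : m ≤ y + d) :
    m * ((x - y) ^ 2 / (x * y)) ≤ d ^ 2 / α := by
  wlog hle : x ≤ y generalizing x y
  · have := this hy hx (by rwa [abs_sub_comm]) hmy hmx (le_of_not_ge hle)
    rwa [mul_comm y, show (y - x) ^ 2 = (x - y) ^ 2 by ring] at this
  have hd : y - x ≤ d := by rw [abs_sub_comm] at hxy; exact (abs_le.mp hxy).2
  have hd0 : 0 ≤ d := (abs_nonneg _).trans hxy
  have hx0 : 0 < x := hα.trans_le hx
  -- `(x + d) e² - d² (x + e) = (e - d) (x (e + d) + d e)` with `e = y - x ∈ [0, d]`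
  have hm : m * (x - y) ^ 2 ≤ d ^ 2 * y := by
    have : 0 ≤ (d - (y - x)) * (x * (y - x + d) + d * (y - x)) :=
      mul_nonneg (by linarith) (by positivity)
    nlinarith [mul_le_mul_of_nonneg_right hmx (sq_nonneg (x - y))]
  rw [← mul_div_assoc, div_le_div_iff₀ (mul_pos hx0 (hα.trans_le hy)) hα]
  nlinarith [mul_le_mul_of_nonneg_left hx (mul_nonneg (sq_nonneg d) (by linarith) : 0 ≤ d ^ 2 * y)]

theorem abs_sub_inv_sum_div_le {ι : Type*} [Fintype ι] [LinearOrder ι] {w a : ι → ℝ}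
    {α d : ℝ} (hα : 0 < α) (ha : ∀ i, α ≤ a i) (hw : ∀ i, 0 ≤ w i) (hsum : ∑ i, w i = 1)
    (hspread : ∀ i j, |a i - a j| ≤ d) :
    |(∑ i, w i * a i) - (∑ i, w i / a i)⁻¹|
      ≤ d ^ 2 * (∑ p ∈ univ.filter (fun p : ι × ι => p.1 < p.2), w p.1 * w p.2) / α := by
  have ha0 i : 0 < a i := hα.trans_le (ha i)
  set S := ∑ i, w i / a i
  have hS_ge i : (a i + d)⁻¹ ≤ S :=
    inv_le_sum_div hw hsum ha0 fun k => by linarith [(abs_le.mp (hspread k i)).2]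
  have hpos i : 0 < a i + d := by linarith [ha0 i, (abs_nonneg _).trans (hspread i i)]
  obtain ⟨i₀, -⟩ := Finset.nonempty_of_sum_ne_zero (hsum.trans_ne one_ne_zero)
  have hSpos : 0 < S := (inv_pos.mpr (hpos i₀)).trans_le (hS_ge i₀)
  have hww (p : ι × ι) : 0 ≤ w p.1 * w p.2 := mul_nonneg (hw _) (hw _)
  have hterm_nonneg (p : ι × ι) : 0 ≤ S⁻¹ * ((a p.1 - a p.2) ^ 2 / (a p.1 * a p.2)) :=
    mul_nonneg (inv_pos.mpr hSpos).le (div_nonneg (sq_nonneg _) (mul_pos (ha0 _) (ha0 _)).le)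
  have hterm (p : ι × ι) : S⁻¹ * ((a p.1 - a p.2) ^ 2 / (a p.1 * a p.2)) ≤ d ^ 2 / α :=
    mul_sq_sub_div_mul_le hα (ha _) (ha _) (hspread _ _)
      (inv_le_of_inv_le₀ (hpos _) (hS_ge _)) (inv_le_of_inv_le₀ (hpos _) (hS_ge _))
  rw [sub_inv_sum_div_eq hsum (fun i => (ha0 i).ne') hSpos.ne',
    abs_of_nonneg (sum_nonneg fun p _ => mul_nonneg (hww p) (hterm_nonneg p)), mul_sum, sum_div]
  exact sum_le_sum fun p _ =>
    (mul_le_mul_of_nonneg_left (hterm p) (hww p)).trans_eq (by ring)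

theorem weighted_AM_HM_close_n (n : ℕ) (hn : 2 ≤ n)
    (a w : Fin n → ℝ) (α C h : ℝ)
    (hα : 0 < α) (ha : ∀ i, α ≤ a i)
    (hw : ∀ i, 0 < w i) (hsum : ∑ i, w i = 1)
    (hdiff : ∀ i, |a ⟨0, by omega⟩ - a i| ≤ C * h) :
    |(∑ i, w i * a i) - (∑ i, w i / a i)⁻¹|
      ≤ 4 * C ^ 2 * h ^ 2
          * (∑ p ∈ Finset.univ.filter (fun p : Fin n × Fin n => p.1 < p.2),
              w p.1 * w p.2) / α ∧
    4 * C ^ 2 * h ^ 2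
      * (∑ p ∈ Finset.univ.filter (fun p : Fin n × Fin n => p.1 < p.2),
          w p.1 * w p.2) / α
      ≤ 2 * C ^ 2 * h ^ 2 / α := by
  have hspread i j : |a i - a j| ≤ 2 * (C * h) := by
    have hi := abs_le.mp (hdiff i)
    have hj := abs_le.mp (hdiff j)
    exact abs_le.mpr ⟨by linarith, by linarith⟩
  have hpairs := two_mul_sum_lt_mul_le_sq_sum w
  rw [hsum, one_pow] at hpairs
  constructor
  · convert abs_sub_inv_sum_div_le hα ha (fun i => (hw i).le) hsum hspread using 2
    ring
  · exact div_le_div_of_nonneg_right (by nlinarith [sq_nonneg (C * h)]) hα.le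
end
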